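/- Fix an impulse time sequence and consider the impulsive system with inputs and outputs determined by continuous bounded maps Ã, Ẽ_c, C̃_c, F̃_c and bounded sequences J̃(k), Ẽ_d(k), C̃_d(k), F̃_d(k), where Ã(t) is Metzler and Ẽ_c(t), C̃_c(t), F̃_c(t) ≥ 0 for all t, and J̃(k), Ẽ_d(k), C̃_d(k), F̃_d(k) ≥ 0 for all k ≥ 1. Suppose there exist vectors 0 < χ̄₁ ≤ χ̄₂, scalars ε > 0 and γ > 0, and a function χ : [t_0,∞) → ℝ^n, piecewise-C¹ along the impulse sequence, with χ̄₁ ≤ χ(t) ≤ χ̄₂ for all t, satisfying: χ̇(t)ᵀ + χ(t)ᵀÃ(t) + 𝟙ᵀC̃_c(t) ≤ −ε𝟙ᵀ at every t in the interiors of the flow intervals; χ(t_k⁺)ᵀJ̃(k) − χ(t_k)ᵀ + 𝟙ᵀC̃_d(k) ≤ −ε𝟙ᵀ for all k ≥ 1; χ(t)ᵀẼ_c(t) + 𝟙ᵀF̃_c(t) − γ𝟙ᵀ ≤ −ε𝟙ᵀ for all t ≥ t_0; and χ(t_k⁺)ᵀẼ_d(k) + 𝟙ᵀF̃_d(k) −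 γ𝟙ᵀ ≤ −ε𝟙ᵀ for all k ≥ 1. Then: (i) there exist M > 0, α > 0 and ρ ∈ (0,1) such that every trajectory of the homogeneous system satisfies ‖x(t)‖_1 ≤ M ρ^{κ(t,t_0)} e^{−α(t−t_0)} ‖x(t_0)‖_1 for all t ≥ t_0; and (ii) every trajectory with x(t_0) = 0 and nonnegative inputs with ∫_{t_0}^∞ 𝟙ᵀw_c(t) dt < ∞ and Σ_{k≥1} 𝟙ᵀw_d(k) < ∞ satisfies ∫_{t_0}^∞ 𝟙ᵀz_c(t) dt + Σ_{k≥1} 𝟙ᵀz_d(k) ≤ γ (∫_{t_0}^∞ 𝟙ᵀw_c(t) dt + Σ_{k≥1} 𝟙ᵀw_d(k)). -/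

import Mathlib

open Matrix Filter Set Topology

/-- A square real matrix is Metzler if all its off-diagonal entries are nonnegative. -/
def Metzler {n : ℕ} (A : Matrix (Fin n) (Fin n) ℝ) : Prop :=
  ∀ i j, i ≠ j → 0 ≤ A i j

/-- An impulse time sequence: `t 0` is the initial time `t₀`, the `t k` for `k ≥ 1` are the
impulse times; the sequence is strictly increasing and tends to infinity. -/
structure ImpulseSeq where
  t : ℕ → ℝ
  t0_nonneg : 0 ≤ t 0
  mono : StrictMono t
  tendsto_atTop : Filter.Tendsto t Filter.atTop Filter.atTop

/-- `κ(t,s)`: the number of impulse instants `t_k`, `k ≥ 1`, with `s ≤ t_k < t`. -/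
noncomputable def ImpulseSeq.kappa (σ : ImpulseSeq) (s u : ℝ) : ℕ :=
  Set.ncard {k : ℕ | 1 ≤ k ∧ s ≤ σ.t k ∧ σ.t k < u}

/-- A trajectory of the homogeneous impulsive system `ẋ = Ã(t)x`, `x(t_k⁺) = J̃(k)x(t_k)`. -/
def IsHomTrajectory {n : ℕ} (σ : ImpulseSeq)
    (At : ℝ → Matrix (Fin n) (Fin n) ℝ) (J : ℕ → Matrix (Fin n) (Fin n) ℝ)
    (x : ℝ → Fin n → ℝ) : Prop :=
  (∀ k, ContinuousOn x (Set.Ioc (σ.t k) (σ.t (k + 1)))) ∧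
  (∀ k, ∀ s ∈ Set.Ioo (σ.t k) (σ.t (k + 1)), HasDerivAt x (At s *ᵥ x s) s) ∧
  ContinuousWithinAt x (Set.Ici (σ.t 0)) (σ.t 0) ∧
  (∀ k, 1 ≤ k →
    Filter.Tendsto x (nhdsWithin (σ.t k) (Set.Ioi (σ.t k))) (nhds (J k *ᵥ x (σ.t k))))

/-- A function `f` is piecewise-C¹ along the impulse sequence, with derivative `f'` on the
interiors of the flow intervals and right limits `fplus k = f(t_k⁺)` at the impulse times. -/
def PiecewiseC1 {n : ℕ} (σ : ImpulseSeq)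
    (f f' : ℝ → Fin n → ℝ) (fplus : ℕ → Fin n → ℝ) : Prop :=
  (∀ k, ContinuousOn f (Set.Ioc (σ.t k) (σ.t (k + 1)))) ∧
  (∀ k, ∀ s ∈ Set.Ioo (σ.t k) (σ.t (k + 1)), HasDerivAt f (f' s) s) ∧
  (∀ k, ContinuousOn f' (Set.Ioo (σ.t k) (σ.t (k + 1)))) ∧
  ContinuousWithinAt f (Set.Ici (σ.t 0)) (σ.t 0) ∧
  (∀ k, 1 ≤ k →
    Filter.Tendsto f (nhdsWithin (σ.t k) (Set.Ioi (σ.t k))) (nhds (fplus k)))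

open MeasureTheory

/-- The 1-norm `‖v‖₁ = Σᵢ |vᵢ|` of a vector. -/
def norm1 {n : ℕ} (v : Fin n → ℝ) : ℝ := ∑ i, |v i|

/-- A trajectory of the linear impulsive system with inputs. -/
def IsTrajectory {n pc pd : ℕ} (σ : ImpulseSeq)
    (At : ℝ → Matrix (Fin n) (Fin n) ℝ) (Ec : ℝ → Matrix (Fin n) (Fin pc) ℝ)
    (J : ℕ → Matrix (Fin n) (Fin n) ℝ) (Ed : ℕ → Matrix (Fin n) (Fin pd) ℝ)
    (wc : ℝ → Fin pc → ℝ) (wd : ℕ → Fin pd → ℝ)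
    (x : ℝ → Fin n → ℝ) : Prop :=
  (∀ k, ContinuousOn x (Set.Ioc (σ.t k) (σ.t (k + 1)))) ∧
  (∀ k, ∀ s ∈ Set.Ioo (σ.t k) (σ.t (k + 1)),
    HasDerivAt x (At s *ᵥ x s + Ec s *ᵥ wc s) s) ∧
  ContinuousWithinAt x (Set.Ici (σ.t 0)) (σ.t 0) ∧
  (∀ k, 1 ≤ k →
    Filter.Tendsto x (nhdsWithin (σ.t k) (Set.Ioi (σ.t k)))
      (nhds (J k *ᵥ x (σ.t k) + Ed k *ᵥ wd k)))

/-!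
The storage function `V(t) = χ(t)ᵀ |x(t)|` is a weighted `ℓ₁` norm of the state. Although `|x|`
is not differentiable, `V` has a right derivative along the flow; for Metzler `Ã` and nonnegative
data the flow condition bounds it by `-ε ‖x‖₁ - 𝟙ᵀ (C̃_c |x| + F̃_c w_c) + γ 𝟙ᵀ w_c`, and the jump
condition bounds `V(t_k⁺)` by `V(t_k)` minus the analogous discrete dissipation.
Without inputs this gives `V' ≤ -(ε / c) V` on the flow intervals and `V(t_k⁺) ≤ (1 - ε / c) V(t_k)`
at the impulses, where `c` bounds `χ`, and (i) follows by comparing `V` with `‖x‖₁`. With inputs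
and `x(t₀) = 0`, integrating over the flow intervals and summing over the impulses shows that
`∫ 𝟙ᵀ (C̃_c |x| + F̃_c w_c) + Σ 𝟙ᵀ (C̃_d |x| + F̃_d w_d)`, which dominates the outputs, is at most
`γ (∫ 𝟙ᵀ w_c + Σ 𝟙ᵀ w_d)` up to every impulse time; (ii) follows in the limit.
-/

open Real

/-- The right derivative of `|f|` at a point where `f = a` and `f' = d`. -/
noncomputable def rightDerivAbs (a d : ℝ) : ℝ :=
  if a = 0 then |d| else SignType.sign a * d

theorem HasDerivAt.hasDerivWithinAt_abs_Ici {f : ℝ → ℝ} {d t : ℝ} (hf : HasDerivAt f d t) :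
    HasDerivWithinAt (fun s => |f s|) (rightDerivAbs (f t) d) (Ici t) t := by
  rcases eq_or_ne (f t) 0 with h | h
  · rw [rightDerivAbs, if_pos h, ← hasDerivWithinAt_Ioi_iff_Ici,
      hasDerivWithinAt_iff_tendsto_slope' self_notMem_Ioi]
    have hslope : Tendsto (slope f t) (𝓝[>] t) (𝓝 d) :=
      (hasDerivAt_iff_tendsto_slope.mp hf).mono_left (nhdsWithin_mono _ fun s hs => ne_of_gt hs)
    refine hslope.abs.congr' ?_
    filter_upwards [self_mem_nhdsWithin] with s hs
    simp [slope_def_field, h, abs_div, abs_of_pos (sub_pos.2 (mem_Ioi.1 hs))]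
  · rw [rightDerivAbs, if_neg h]
    exact ((hasDerivAt_abs h).comp t hf).hasDerivWithinAt

theorem rightDerivAbs_add_le (a d e : ℝ) :
    rightDerivAbs a (d + e) ≤ rightDerivAbs a d + rightDerivAbs a e := by
  unfold rightDerivAbs
  split_ifs
  exacts [abs_add_le d e, (mul_add _ _ _).le]

theorem rightDerivAbs_le_abs (a d : ℝ) : rightDerivAbs a d ≤ |d| := by
  unfold rightDerivAbs
  split_ifs with h
  · exact le_rfl
  · rcases Ne.lt_or_gt h with h | h <;> simp [h, neg_le_abs, le_abs_self]

theorem rightDerivAbs_mul_self (a c : ℝ) : rightDerivAbs a (c * a) = c * |a| := by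
  unfold rightDerivAbs
  split_ifs with h
  · simp [h]
  · rw [← sign_mul_self a]; ring

theorem Metzler.rightDerivAbs_mulVec_le {n : ℕ} {A : Matrix (Fin n) (Fin n) ℝ} (hA : Metzler A)
    (x : Fin n → ℝ) (i : Fin n) : rightDerivAbs (x i) ((A *ᵥ x) i) ≤ (A *ᵥ |x|) i := by
  change rightDerivAbs (x i) (∑ j, A i j * x j) ≤ ∑ j, A i j * |x| j
  refine (Finset.le_sum_of_subadditive _ (by simp [rightDerivAbs]) (rightDerivAbs_add_le _) _ _
    ).trans (Finset.sum_le_sum fun j _ => ?_)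
  rcases eq_or_ne j i with rfl | hji
  · exact (rightDerivAbs_mul_self _ _).le
  · calc _ ≤ |A i j * x j| := rightDerivAbs_le_abs _ _
      _ = A i j * |x| j := by rw [abs_mul, abs_of_nonneg (hA i j hji.symm)]; rfl

section NonnegMatrix

variable {m n : Type*} [Fintype n] {M : Matrix m n ℝ}

theorem mulVec_nonneg_of_nonneg (hM : ∀ i j, 0 ≤ M i j) {w : n → ℝ} (hw : 0 ≤ w) :
    0 ≤ M *ᵥ w :=
  fun i => Finset.sum_nonneg fun j _ => mul_nonneg (hM i j) (hw j)

theorem abs_mulVec_le (hM : ∀ i j, 0 ≤ M i j) (x : n → ℝ) : |M *ᵥ x| ≤ M *ᵥ |x| := fun i =>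
  (Finset.abs_sum_le_sum_abs _ _).trans_eq <|
    Finset.sum_congr rfl fun j _ => by rw [abs_mul, abs_of_nonneg (hM i j)]; rfl

theorem abs_mulVec_add_mulVec_le {p : Type*} [Fintype p] {E : Matrix m p ℝ} (hM : ∀ i j, 0 ≤ M i j)
    (hE : ∀ i j, 0 ≤ E i j) (x : n → ℝ) {w : p → ℝ} (hw : 0 ≤ w) :
    |M *ᵥ x + E *ᵥ w| ≤ M *ᵥ |x| + E *ᵥ w :=
  (abs_add_le _ _).trans <|
    add_le_add (abs_mulVec_le hM x) (abs_of_nonneg (mulVec_nonneg_of_nonneg hE hw)).le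

end NonnegMatrix

theorem norm1_eq_one_dotProduct {n : ℕ} (v : Fin n → ℝ) : norm1 v = 1 ⬝ᵥ |v| := by
  simp [norm1, one_dotProduct]

theorem exists_pos_forall_le_of_forall_pos {ι : Type*} [Finite ι] {f : ι → ℝ}
    (hf : ∀ i, 0 < f i) : ∃ c, 0 < c ∧ ∀ i, c ≤ f i := by
  cases isEmpty_or_nonempty ι
  · exact ⟨1, one_pos, isEmptyElim⟩
  · obtain ⟨i, hi⟩ := Finite.exists_min f
    exact ⟨f i, hf i, hi⟩

section Storage

variable {n : ℕ} {p : Fin n → ℝ} {c : ℝ}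

theorem dotProduct_abs_le_mul_norm1 (hp : ∀ i, p i ≤ c) (v : Fin n → ℝ) :
    p ⬝ᵥ |v| ≤ c * norm1 v := by
  rw [norm1_eq_one_dotProduct, ← smul_eq_mul, ← smul_dotProduct]
  exact dotProduct_le_dotProduct_of_nonneg_right (fun i => by simpa using hp i) (abs_nonneg v)

theorem mul_norm1_le_dotProduct_abs (hp : ∀ i, c ≤ p i) (v : Fin n → ℝ) :
    c * norm1 v ≤ p ⬝ᵥ |v| := by
  rw [norm1_eq_one_dotProduct, ← smul_eq_mul, ← smul_dotProduct]
  exact dotProduct_le_dotProduct_of_nonneg_right (fun i => by simpa using hp i) (abs_nonneg v)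

end Storage

theorem abs_sum_mulVec_add_mulVec_le {n m q : ℕ} {C : Matrix (Fin q) (Fin n) ℝ}
    {F : Matrix (Fin q) (Fin m) ℝ} (hC : ∀ i j, 0 ≤ C i j) (hF : ∀ i j, 0 ≤ F i j)
    (x : Fin n → ℝ) {w : Fin m → ℝ} (hw : 0 ≤ w) :
    |∑ i, (C *ᵥ x + F *ᵥ w) i| ≤ ∑ i, (C *ᵥ |x| + F *ᵥ w) i :=
  (Finset.abs_sum_le_sum_abs _ _).trans <|
    Finset.sum_le_sum fun i _ => abs_mulVec_add_mulVec_le hC hF x hw i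

section Dissipation

variable {n m q : ℕ} {ε γ : ℝ} {x : Fin n → ℝ} {w : Fin m → ℝ} {E : Matrix (Fin n) (Fin m) ℝ}
  {C : Matrix (Fin q) (Fin n) ℝ} {F : Matrix (Fin q) (Fin m) ℝ}

theorem sum_mul_rightDerivAbs_le {p : Fin n → ℝ} {A : Matrix (Fin n) (Fin n) ℝ} (hp : 0 ≤ p)
    (hA : Metzler A) (hE : ∀ i j, 0 ≤ E i j) (hw : 0 ≤ w) :
    ∑ i, p i * rightDerivAbs (x i) ((A *ᵥ x + E *ᵥ w) i) ≤ (p ᵥ* A) ⬝ᵥ |x| + (p ᵥ* E) ⬝ᵥ w := by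
  have key : ∀ i, rightDerivAbs (x i) ((A *ᵥ x + E *ᵥ w) i) ≤ (A *ᵥ |x| + E *ᵥ w) i := fun i =>
    calc _ ≤ rightDerivAbs (x i) ((A *ᵥ x) i) + |(E *ᵥ w) i| :=
          (rightDerivAbs_add_le _ _ _).trans (add_le_add_right (rightDerivAbs_le_abs _ _) _)
      _ ≤ (A *ᵥ |x| + E *ᵥ w) i :=
          add_le_add (hA.rightDerivAbs_mulVec_le x i)
            (abs_of_nonneg (mulVec_nonneg_of_nonneg hE hw i)).le
  calc _ ≤ p ⬝ᵥ (A *ᵥ |x| + E *ᵥ w) :=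
        Finset.sum_le_sum fun i _ => mul_le_mul_of_nonneg_left (key i) (hp i)
    _ = _ := by rw [dotProduct_add, dotProduct_mulVec, dotProduct_mulVec]

theorem sum_mulVec_add_mulVec (x : Fin n → ℝ) (w : Fin m → ℝ) :
    ∑ i, (C *ᵥ x + F *ᵥ w) i = (1 ᵥ* C) ⬝ᵥ x + (1 ᵥ* F) ⬝ᵥ w := by
  rw [← dotProduct_mulVec, ← dotProduct_mulVec, ← dotProduct_add, one_dotProduct]

theorem flow_dissipation {p p' : Fin n → ℝ} {A : Matrix (Fin n) (Fin n) ℝ} (hε : 0 ≤ ε)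
    (hp : 0 ≤ p) (hA : Metzler A) (hE : ∀ i j, 0 ≤ E i j) (hw : 0 ≤ w)
    (hflow : ∀ j, (p' + p ᵥ* A + 1 ᵥ* C) j ≤ -ε)
    (hperf : ∀ j, (p ᵥ* E + 1 ᵥ* F) j - γ ≤ -ε) :
    p' ⬝ᵥ |x| + ∑ i, p i * rightDerivAbs (x i) ((A *ᵥ x + E *ᵥ w) i)
      ≤ -ε * norm1 x - ∑ i, (C *ᵥ |x| + F *ᵥ w) i + γ * ∑ i, w i := by
  have hx := dotProduct_le_dotProduct_of_nonneg_right (u := p' + p ᵥ* A + 1 ᵥ* C) (v := -ε • 1)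
    (fun j => by simpa using hflow j) (abs_nonneg x)
  have hw' := dotProduct_le_dotProduct_of_nonneg_right (u := p ᵥ* E + 1 ᵥ* F) (v := γ • 1)
    (fun j => by simpa using (by linarith [hperf j] : (p ᵥ* E + 1 ᵥ* F) j ≤ γ)) hw
  simp only [add_dotProduct, smul_dotProduct, smul_eq_mul, one_dotProduct] at hx hw'
  rw [norm1_eq_one_dotProduct, one_dotProduct]
  linarith [sum_mul_rightDerivAbs_le (x := x) hp hA hE hw,
    sum_mulVec_add_mulVec (C := C) (F := F) |x| w]

theorem jump_dissipation {p p₀ : Fin n → ℝ} {J : Matrix (Fin n) (Fin n) ℝ} (hε : 0 ≤ ε)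
    (hp : 0 ≤ p) (hJ : ∀ i j, 0 ≤ J i j) (hE : ∀ i j, 0 ≤ E i j) (hw : 0 ≤ w)
    (hjump : ∀ j, (p ᵥ* J - p₀ + 1 ᵥ* C) j ≤ -ε)
    (hperf : ∀ j, (p ᵥ* E + 1 ᵥ* F) j - γ ≤ -ε) :
    p ⬝ᵥ |J *ᵥ x + E *ᵥ w|
      ≤ p₀ ⬝ᵥ |x| - ε * norm1 x - ∑ i, (C *ᵥ |x| + F *ᵥ w) i + γ * ∑ i, w i := by
  have hx := dotProduct_le_dotProduct_of_nonneg_right (u := p ᵥ* J - p₀ + 1 ᵥ* C) (v := -ε • 1)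
    (fun j => by simpa using hjump j) (abs_nonneg x)
  have hw' := dotProduct_le_dotProduct_of_nonneg_right (u := p ᵥ* E + 1 ᵥ* F) (v := γ • 1)
    (fun j => by simpa using (by linarith [hperf j] : (p ᵥ* E + 1 ᵥ* F) j ≤ γ)) hw
  have hJx : p ⬝ᵥ |J *ᵥ x + E *ᵥ w| ≤ (p ᵥ* J) ⬝ᵥ |x| + (p ᵥ* E) ⬝ᵥ w := by
    rw [← dotProduct_mulVec, ← dotProduct_mulVec, ← dotProduct_add]
    exact dotProduct_le_dotProduct_of_nonneg_left (abs_mulVec_add_mulVec_le hJ hE x hw) hp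
  simp only [add_dotProduct, sub_dotProduct, smul_dotProduct, smul_eq_mul, one_dotProduct] at hx hw'
  rw [norm1_eq_one_dotProduct, one_dotProduct]
  linarith [sum_mulVec_add_mulVec (C := C) (F := F) |x| w]

end Dissipation

section RightDerivative

variable {f : ℝ → ℝ} {a b L : ℝ}

theorem le_of_tendsto_of_hasDerivWithinAt_Ici_nonpos (hab : a < b) (hf : ContinuousOn f (Ioc a b))
    (hL : Tendsto f (𝓝[>] a) (𝓝 L))
    (hf' : ∀ x ∈ Ioo a b, ∃ d ≤ 0, HasDerivWithinAt f d (Ici x) x) : f b ≤ L := by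
  choose! f' hf'_nonpos hf' using hf'
  have key : ∀ c ∈ Ioo a b, f b ≤ f c := fun c hc =>
    image_le_of_deriv_right_le_deriv_boundary (B := fun _ => f c) (B' := 0)
      (hf.mono fun x hx => ⟨hc.1.trans_le hx.1, hx.2⟩)
      (fun x hx => hf' x ⟨hc.1.trans_le hx.1, hx.2⟩) le_rfl continuousOn_const
      (fun x _ => hasDerivWithinAt_const _ _ _)
      (fun x hx => hf'_nonpos x ⟨hc.1.trans_le hx.1, hx.2⟩) ⟨hc.2.le, le_rfl⟩
  refine ge_of_tendsto hL ?_
  filter_upwards [Ioo_mem_nhdsGT hab] with c hc using key c hc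

theorem le_mul_exp_of_hasDerivWithinAt_Ici_le {α : ℝ} (hab : a < b)
    (hf : ContinuousOn f (Ioc a b)) (hL : Tendsto f (𝓝[>] a) (𝓝 L))
    (hf' : ∀ x ∈ Ioo a b, ∃ d ≤ -α * f x, HasDerivWithinAt f d (Ici x) x) :
    f b ≤ L * exp (-(α * (b - a))) := by
  have hexp : ∀ x, HasDerivAt (fun y => exp (α * (y - a))) (exp (α * (x - a)) * α) x := fun x => by
    simpa using (((hasDerivAt_id x).sub_const a).const_mul α).exp
  have hU := le_of_tendsto_of_hasDerivWithinAt_Ici_nonpos (f := fun y => exp (α * (y - a)) * f y)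
    (L := 1 * L) hab ((by fun_prop : Continuous fun y => exp (α * (y - a))).continuousOn.mul hf)
    ((((by fun_prop : Continuous fun y => exp (α * (y - a))).tendsto' a 1 (by simp)).mono_left
      nhdsWithin_le_nhds).mul hL) fun x hx => by
    obtain ⟨d, hd, hfd⟩ := hf' x hx
    refine ⟨_, ?_, (hexp x).hasDerivWithinAt.mul hfd⟩
    have := exp_pos (α * (x - a))
    nlinarith
  calc f b = exp (-(α * (b - a))) * (exp (α * (b - a)) * f b) := by
        rw [← mul_assoc, ← exp_add, neg_add_cancel, exp_zero, one_mul]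
    _ ≤ exp (-(α * (b - a))) * (1 * L) := mul_le_mul_of_nonneg_left hU (exp_pos _).le
    _ = L * exp (-(α * (b - a))) := by ring

theorem le_add_integral_of_hasDerivWithinAt_Ici_le {ψ : ℝ → ℝ} (hab : a < b)
    (hf : ContinuousOn f (Ioc a b)) (hL : Tendsto f (𝓝[>] a) (𝓝 L))
    (hψ : IntegrableOn ψ (Ioc a b)) (hψc : ContinuousOn ψ (Ioo a b))
    (hf' : ∀ x ∈ Ioo a b, ∃ d ≤ ψ x, HasDerivWithinAt f d (Ici x) x) :
    f b ≤ L + ∫ x in a..b, ψ x := by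
  have hψ' : IntegrableOn ψ (uIcc a b) := by
    rwa [uIcc_of_le hab.le, integrableOn_Icc_iff_integrableOn_Ioc]
  have hprim := intervalIntegral.continuousOn_primitive_interval hψ'
  rw [uIcc_of_le hab.le] at hprim
  have hprim0 : Tendsto (fun x => ∫ y in a..x, ψ y) (𝓝[>] a) (𝓝 0) := by
    have := hprim a (left_mem_Icc.2 hab.le)
    rw [ContinuousWithinAt, intervalIntegral.integral_same] at this
    rw [← nhdsWithin_Ioc_eq_nhdsGT hab]
    exact this.mono_left (nhdsWithin_mono _ Ioc_subset_Icc_self)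
  have hU := le_of_tendsto_of_hasDerivWithinAt_Ici_nonpos (f := fun x => f x - ∫ y in a..x, ψ y)
    (L := L - 0) hab (hf.sub (hprim.mono Ioc_subset_Icc_self)) (hL.sub hprim0) fun x hx => by
    obtain ⟨d, hd, hfd⟩ := hf' x hx
    have hFTC : HasDerivAt (fun x => ∫ y in a..x, ψ y) (ψ x) x :=
      intervalIntegral.integral_hasDerivAt_right
        ((intervalIntegrable_iff_integrableOn_Ioc_of_le hx.1.le).2
          (hψ.mono_set (Ioc_subset_Ioc_right hx.2.le)))
        (hψc.stronglyMeasurableAtFilter isOpen_Ioo x hx) (hψc.continuousAt (Ioo_mem_nhds hx.1 hx.2))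
    exact ⟨d - ψ x, by linarith, hfd.sub hFTC.hasDerivWithinAt⟩
  linarith

end RightDerivative

theorem ContinuousOn.integrableOn_Ioc_of_tendsto {E : Type*} [NormedAddCommGroup E] {f : ℝ → E}
    {a b : ℝ} {L : E} (hf : ContinuousOn f (Ioc a b)) (hL : Tendsto f (𝓝[>] a) (𝓝 L)) :
    IntegrableOn f (Ioc a b) := by
  classical
  have hext : ContinuousOn (Function.update f a L) (Icc a b) := by
    rw [continuousOn_update_iff, Icc_sdiff_left]
    exact ⟨hf, fun _ => hL.mono_left (nhdsWithin_mono _ Ioc_subset_Ioi_self)⟩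
  exact (hext.integrableOn_Icc.mono_set Ioc_subset_Icc_self).congr_fun
    (fun x hx => Function.update_of_ne hx.1.ne' _ _) measurableSet_Ioc

theorem integral_add_tsum_le_of_forall_partial_le {G : ℝ → ℝ} {D : ℕ → ℝ} {a R : ℝ} {b : ℕ → ℝ}
    (hb : Tendsto b atTop atTop) (hab : ∀ k, a ≤ b k) (hGi : ∀ k, IntegrableOn G (Ioc a (b k)))
    (hG : ∀ s ∈ Ioi a, 0 ≤ G s) (hD : ∀ k, 0 ≤ D k)
    (hR : ∀ k, (∫ s in a..b k, G s) + ∑ j ∈ Finset.range k, D j ≤ R) :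
    IntegrableOn G (Ioi a) ∧ Summable D ∧ (∫ s in Ioi a, G s) + ∑' k, D k ≤ R := by
  have hnorm : ∀ k, (∫ s in a..b k, ‖G s‖) = ∫ s in a..b k, G s := fun k => by
    simp only [intervalIntegral.integral_of_le (hab k)]
    exact setIntegral_congr_fun measurableSet_Ioc fun s hs => Real.norm_of_nonneg (hG s hs.1)
  have hGk : ∀ k, 0 ≤ ∫ s in a..b k, G s := fun k =>
    hnorm k ▸ intervalIntegral.integral_nonneg (hab k) fun _ _ => norm_nonneg _
  have hDk : ∀ k, 0 ≤ ∑ j ∈ Finset.range k, D j := fun k => Finset.sum_nonneg fun j _ => hD j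
  have hint : IntegrableOn G (Ioi a) :=
    integrableOn_Ioi_of_intervalIntegral_norm_bounded R a hGi hb
      (Eventually.of_forall fun k => by linarith [hnorm k, hR k, hDk k])
  have hsum : Summable D := summable_of_sum_range_le hD fun k => by linarith [hR k, hGk k]
  exact ⟨hint, hsum, le_of_tendsto'
    ((intervalIntegral_tendsto_integral_Ioi a hint hb).add hsum.hasSum.tendsto_sum_nat) hR⟩

namespace ImpulseSeq

variable (σ : ImpulseSeq)

theorem t_zero_le (k : ℕ) : σ.t 0 ≤ σ.t k := σ.mono.monotone k.zero_le

theorem t_nonneg (k : ℕ) : 0 ≤ σ.t k := σ.t0_nonneg.trans (σ.t_zero_le k)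

theorem t_lt_succ (k : ℕ) : σ.t k < σ.t (k + 1) := σ.mono k.lt_succ_self

theorem exists_mem_Ioc {s : ℝ} (hs : σ.t 0 < s) : ∃ k, s ∈ Ioc (σ.t k) (σ.t (k + 1)) := by
  classical
  have hex : ∃ m, s ≤ σ.t m := (σ.tendsto_atTop.eventually_ge_atTop s).exists
  obtain ⟨k, hk⟩ : ∃ k, Nat.find hex = k + 1 :=
    Nat.exists_eq_succ_of_ne_zero fun h => (h ▸ Nat.find_spec hex).not_gt hs
  exact ⟨k, not_le.1 (Nat.find_min hex (by omega)), hk ▸ Nat.find_spec hex⟩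

theorem iUnion_Ioc_eq_Ioi : ⋃ k, Ioc (σ.t k) (σ.t (k + 1)) = Ioi (σ.t 0) :=
  Subset.antisymm (iUnion_subset fun k _ hs => (σ.t_zero_le k).trans_lt hs.1)
    fun _ hs => mem_iUnion.2 (σ.exists_mem_Ioc hs)

theorem kappa_self : σ.kappa (σ.t 0) (σ.t 0) = 0 := by
  simp [kappa, fun k => not_lt.2 (σ.t_zero_le k)]

theorem kappa_eq_of_mem_Ioc {k : ℕ} {s : ℝ} (hs : s ∈ Ioc (σ.t k) (σ.t (k + 1))) :
    σ.kappa (σ.t 0) s = k := by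
  have : {j : ℕ | 1 ≤ j ∧ σ.t 0 ≤ σ.t j ∧ σ.t j < s} = Finset.Icc 1 k := by
    ext j
    simp only [mem_ofPred_eq, Finset.coe_Icc, mem_Icc, σ.t_zero_le j, true_and]
    refine and_congr_right fun _ => ⟨fun hj => ?_, fun hj => (σ.mono.monotone hj).trans_lt hs.1⟩
    exact Nat.lt_succ_iff.1 (σ.mono.lt_iff_lt.1 (hj.trans_le hs.2))
  rw [kappa, this, ncard_coe_finset, Nat.card_Icc, Nat.add_sub_cancel]

theorem intervalIntegrable_t_zero {ψ : ℝ → ℝ} (hψ : ∀ k, IntegrableOn ψ (Ioc (σ.t k) (σ.t (k + 1))))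
    (k : ℕ) : IntervalIntegrable ψ volume (σ.t 0) (σ.t k) := by
  induction k with
  | zero => exact IntervalIntegrable.refl
  | succ k ih =>
    exact ih.trans ((intervalIntegrable_iff_integrableOn_Ioc_of_le (σ.t_lt_succ k).le).2 (hψ k))

theorem le_pow_kappa_mul_exp_of_flow_of_jump {V : ℝ → ℝ} {Vp : ℕ → ℝ} {ρ α : ℝ} (hρ : 0 ≤ ρ)
    (h0 : Vp 0 = V (σ.t 0))
    (hflow : ∀ k, ∀ b ∈ Ioc (σ.t k) (σ.t (k + 1)), V b ≤ Vp k * exp (-(α * (b - σ.t k))))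
    (hjump : ∀ k, Vp (k + 1) ≤ ρ * V (σ.t (k + 1))) {s : ℝ} (hs : σ.t 0 ≤ s) :
    V s ≤ ρ ^ σ.kappa (σ.t 0) s * (exp (-(α * (s - σ.t 0))) * V (σ.t 0)) := by
  have hpiece : ∀ k, ∀ b ∈ Ioc (σ.t k) (σ.t (k + 1)),
      V b ≤ ρ ^ k * (exp (-(α * (b - σ.t 0))) * V (σ.t 0)) := by
    intro k
    induction k with
    | zero => simpa [h0, mul_comm] using hflow 0
    | succ k ih =>
      intro b hb
      have hexp : exp (-(α * (σ.t (k + 1) - σ.t 0))) * exp (-(α * (b - σ.t (k + 1))))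
          = exp (-(α * (b - σ.t 0))) := by rw [← exp_add]; ring_nf
      calc V b ≤ Vp (k + 1) * exp (-(α * (b - σ.t (k + 1)))) := hflow _ b hb
        _ ≤ ρ * (ρ ^ k * (exp (-(α * (σ.t (k + 1) - σ.t 0))) * V (σ.t 0)))
              * exp (-(α * (b - σ.t (k + 1)))) :=
            mul_le_mul_of_nonneg_right ((hjump k).trans (mul_le_mul_of_nonneg_left
              (ih _ ⟨σ.t_lt_succ k, le_rfl⟩) hρ)) (exp_pos _).le
        _ = _ := by rw [← hexp]; ring
  rcases hs.eq_or_lt with rfl | hs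
  · simp [σ.kappa_self]
  · obtain ⟨k, hk⟩ := σ.exists_mem_Ioc hs
    rw [σ.kappa_eq_of_mem_Ioc hk]
    exact hpiece k s hk

theorem le_add_integral_add_sum_of_flow_of_jump {V ψ : ℝ → ℝ} {Vp δ : ℕ → ℝ}
    (h0 : Vp 0 = V (σ.t 0)) (hψ : ∀ k, IntegrableOn ψ (Ioc (σ.t k) (σ.t (k + 1))))
    (hflow : ∀ k, ∀ b ∈ Ioc (σ.t k) (σ.t (k + 1)), V b ≤ Vp k + ∫ s in σ.t k..b, ψ s)
    (hjump : ∀ k, Vp (k + 1) ≤ V (σ.t (k + 1)) + δ (k + 1)) (k : ℕ) :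
    ∀ b ∈ Ioc (σ.t k) (σ.t (k + 1)),
      V b ≤ V (σ.t 0) + (∫ s in σ.t 0..b, ψ s) + ∑ j ∈ Finset.range k, δ (j + 1) := by
  induction k with
  | zero => simpa [h0] using hflow 0
  | succ k ih =>
    intro b hb
    have hsplit : (∫ s in σ.t 0..σ.t (k + 1), ψ s) + ∫ s in σ.t (k + 1)..b, ψ s
        = ∫ s in σ.t 0..b, ψ s :=
      intervalIntegral.integral_add_adjacent_intervals (σ.intervalIntegrable_t_zero hψ _)
        ((intervalIntegrable_iff_integrableOn_Ioc_of_le hb.1.le).2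
          ((hψ _).mono_set (Ioc_subset_Ioc_right hb.2)))
    have := ih _ ⟨σ.t_lt_succ k, le_rfl⟩
    rw [Finset.sum_range_succ, ← hsplit]
    linarith [hflow _ b hb, hjump k]

variable {E E' : Type*}

def rightLim (f : ℝ → E) (fp : ℕ → E) (k : ℕ) : E := if k = 0 then f (σ.t 0) else fp k

@[simp]
theorem rightLim_zero (f : ℝ → E) (fp : ℕ → E) : σ.rightLim f fp 0 = f (σ.t 0) := if_pos rfl

@[simp]
theorem rightLim_succ (f : ℝ → E) (fp : ℕ → E) (k : ℕ) : σ.rightLim f fp (k + 1) = fp (k + 1) :=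
  if_neg k.succ_ne_zero

variable [TopologicalSpace E] [TopologicalSpace E']

def PiecewiseContinuous (f : ℝ → E) (fp : ℕ → E) : Prop :=
  ∀ k, ContinuousOn f (Ioc (σ.t k) (σ.t (k + 1))) ∧ Tendsto f (𝓝[>] σ.t k) (𝓝 (fp k))

variable {σ}

theorem piecewiseContinuous_rightLim {f : ℝ → E} {fp : ℕ → E}
    (hc : ∀ k, ContinuousOn f (Ioc (σ.t k) (σ.t (k + 1))))
    (h0 : ContinuousWithinAt f (Ici (σ.t 0)) (σ.t 0))
    (hp : ∀ k, 1 ≤ k → Tendsto f (𝓝[>] σ.t k) (𝓝 (fp k))) :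
    σ.PiecewiseContinuous f (σ.rightLim f fp) := fun k => ⟨hc k, by
  rcases Nat.eq_zero_or_pos k with rfl | hk
  · simpa using (h0.mono Ioi_subset_Ici_self).tendsto
  · obtain ⟨k, rfl⟩ := Nat.exists_eq_add_of_lt hk
    simpa using hp _ hk⟩

theorem PiecewiseContinuous.of_continuousOn_Ici {f : ℝ → E} (hf : ContinuousOn f (Ici 0)) :
    σ.PiecewiseContinuous f (fun k => f (σ.t k)) := fun k =>
  ⟨hf.mono fun _ hs => (σ.t_nonneg k).trans hs.1.le,
    (hf _ (σ.t_nonneg k)).tendsto.mono_left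
      (nhdsWithin_mono _ fun _ hs => (σ.t_nonneg k).trans (le_of_lt hs))⟩

namespace PiecewiseContinuous

variable {f : ℝ → E} {fp : ℕ → E}

theorem comp (h : σ.PiecewiseContinuous f fp) {g : E → E'} (hg : Continuous g) :
    σ.PiecewiseContinuous (g ∘ f) (g ∘ fp) := fun k =>
  ⟨hg.comp_continuousOn (h k).1, (hg.tendsto _).comp (h k).2⟩

theorem prodMk (hf : σ.PiecewiseContinuous f fp) {g : ℝ → E'} {gp : ℕ → E'}
    (hg : σ.PiecewiseContinuous g gp) :
    σ.PiecewiseContinuous (fun s => (f s, g s)) (fun k => (fp k, gp k)) := fun k =>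
  ⟨(hf k).1.prodMk (hg k).1, (hf k).2.prodMk_nhds (hg k).2⟩

theorem integrableOn_Ioc {G : Type*} [NormedAddCommGroup G] {f : ℝ → G} {fp : ℕ → G}
    (h : σ.PiecewiseContinuous f fp) (k : ℕ) : IntegrableOn f (Ioc (σ.t k) (σ.t (k + 1))) :=
  (h k).1.integrableOn_Ioc_of_tendsto (h k).2

theorem aestronglyMeasurable {G : Type*} [NormedAddCommGroup G] {f : ℝ → G} {fp : ℕ → G}
    (h : σ.PiecewiseContinuous f fp) : AEStronglyMeasurable f (volume.restrict (Ioi (σ.t 0))) := by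
  rw [← σ.iUnion_Ioc_eq_Ioi]
  exact aestronglyMeasurable_iUnion_iff.2 fun k => (h k).1.aestronglyMeasurable measurableSet_Ioc

theorem le_of_forall_le [Preorder E] [ClosedIciTopology E] {c : E}
    (h : σ.PiecewiseContinuous f fp) (hc : ∀ s, σ.t 0 ≤ s → c ≤ f s) (k : ℕ) : c ≤ fp k :=
  ge_of_tendsto (h k).2 <| eventually_nhdsWithin_of_forall fun s hs =>
    hc s ((σ.t_zero_le k).trans (le_of_lt hs))

end PiecewiseContinuous

end ImpulseSeq

@[fun_prop]
theorem Continuous.pi_abs {X ι : Type*} [TopologicalSpace X] {f : X → ι → ℝ} (hf : Continuous f) :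
    Continuous fun x => |f x| :=
  continuous_pi fun i => ((continuous_apply i).comp hf).abs

theorem hasDerivWithinAt_dotProduct_abs {n : ℕ} {χ x : ℝ → Fin n → ℝ} {χ' x' : Fin n → ℝ} {s : ℝ}
    (hχ : HasDerivAt χ χ' s) (hx : HasDerivAt x x' s) :
    HasDerivWithinAt (fun u => χ u ⬝ᵥ |x u|)
      (χ' ⬝ᵥ |x s| + ∑ i, χ s i * rightDerivAbs (x s i) (x' i)) (Ici s) s := by
  rw [dotProduct, ← Finset.sum_add_distrib]
  exact HasDerivWithinAt.fun_sum fun i _ =>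
    (hasDerivAt_pi.1 hχ i).hasDerivWithinAt.mul (hasDerivAt_pi.1 hx i).hasDerivWithinAt_abs_Ici

structure IsPositiveSystem {n pc pd qc qd : ℕ}
    (At : ℝ → Matrix (Fin n) (Fin n) ℝ) (Ec : ℝ → Matrix (Fin n) (Fin pc) ℝ)
    (Cc : ℝ → Matrix (Fin qc) (Fin n) ℝ) (Fc : ℝ → Matrix (Fin qc) (Fin pc) ℝ)
    (J : ℕ → Matrix (Fin n) (Fin n) ℝ) (Ed : ℕ → Matrix (Fin n) (Fin pd) ℝ)
    (Cd : ℕ → Matrix (Fin qd) (Fin n) ℝ) (Fd : ℕ → Matrix (Fin qd) (Fin pd) ℝ) : Prop where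
  metzler : ∀ t : ℝ, 0 ≤ t → Metzler (At t)
  Ec_nonneg : ∀ t : ℝ, 0 ≤ t → ∀ i j, 0 ≤ Ec t i j
  Cc_nonneg : ∀ t : ℝ, 0 ≤ t → ∀ i j, 0 ≤ Cc t i j
  Fc_nonneg : ∀ t : ℝ, 0 ≤ t → ∀ i j, 0 ≤ Fc t i j
  J_nonneg : ∀ k : ℕ, 1 ≤ k → ∀ i j, 0 ≤ J k i j
  Ed_nonneg : ∀ k : ℕ, 1 ≤ k → ∀ i j, 0 ≤ Ed k i j
  Cd_nonneg : ∀ k : ℕ, 1 ≤ k → ∀ i j, 0 ≤ Cd k i j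
  Fd_nonneg : ∀ k : ℕ, 1 ≤ k → ∀ i j, 0 ≤ Fd k i j

structure IsL1Certificate {n pc pd qc qd : ℕ} (σ : ImpulseSeq)
    (At : ℝ → Matrix (Fin n) (Fin n) ℝ) (Ec : ℝ → Matrix (Fin n) (Fin pc) ℝ)
    (Cc : ℝ → Matrix (Fin qc) (Fin n) ℝ) (Fc : ℝ → Matrix (Fin qc) (Fin pc) ℝ)
    (J : ℕ → Matrix (Fin n) (Fin n) ℝ) (Ed : ℕ → Matrix (Fin n) (Fin pd) ℝ)
    (Cd : ℕ → Matrix (Fin qd) (Fin n) ℝ) (Fd : ℕ → Matrix (Fin qd) (Fin pd) ℝ)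
    (χ χ' : ℝ → Fin n → ℝ) (χp : ℕ → Fin n → ℝ) (ε γ : ℝ) : Prop where
  piecewiseC1 : PiecewiseC1 σ χ χ' χp
  nonneg : ∀ s, σ.t 0 ≤ s → 0 ≤ χ s
  flow : ∀ k, ∀ s ∈ Ioo (σ.t k) (σ.t (k + 1)), ∀ j, (χ' s + χ s ᵥ* At s + 1 ᵥ* Cc s) j ≤ -ε
  jump : ∀ k : ℕ, 1 ≤ k → ∀ j, (χp k ᵥ* J k - χ (σ.t k) + 1 ᵥ* Cd k) j ≤ -ε
  perf_c : ∀ s : ℝ, σ.t 0 ≤ s → ∀ j, (χ s ᵥ* Ec s + 1 ᵥ* Fc s) j - γ ≤ -ε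
  perf_d : ∀ k : ℕ, 1 ≤ k → ∀ j, (χp k ᵥ* Ed k + 1 ᵥ* Fd k) j - γ ≤ -ε

section Trajectory

variable {n pc pd qc qd : ℕ} {σ : ImpulseSeq}
  {At : ℝ → Matrix (Fin n) (Fin n) ℝ} {Ec : ℝ → Matrix (Fin n) (Fin pc) ℝ}
  {Cc : ℝ → Matrix (Fin qc) (Fin n) ℝ} {Fc : ℝ → Matrix (Fin qc) (Fin pc) ℝ}
  {J : ℕ → Matrix (Fin n) (Fin n) ℝ} {Ed : ℕ → Matrix (Fin n) (Fin pd) ℝ}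
  {Cd : ℕ → Matrix (Fin qd) (Fin n) ℝ} {Fd : ℕ → Matrix (Fin qd) (Fin pd) ℝ}
  {wc : ℝ → Fin pc → ℝ} {wd : ℕ → Fin pd → ℝ} {x : ℝ → Fin n → ℝ}
  {χ χ' : ℝ → Fin n → ℝ} {χp : ℕ → Fin n → ℝ} {ε γ : ℝ}

theorem IsTrajectory.piecewiseContinuous (hx : IsTrajectory σ At Ec J Ed wc wd x) :
    σ.PiecewiseContinuous x (σ.rightLim x fun k => J k *ᵥ x (σ.t k) + Ed k *ᵥ wd k) :=
  ImpulseSeq.piecewiseContinuous_rightLim hx.1 hx.2.2.1 hx.2.2.2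

theorem PiecewiseC1.piecewiseContinuous (hχ : PiecewiseC1 σ χ χ' χp) :
    σ.PiecewiseContinuous χ (σ.rightLim χ χp) :=
  ImpulseSeq.piecewiseContinuous_rightLim hχ.1 hχ.2.2.2.1 hχ.2.2.2.2

theorem IsL1Certificate.jump_weight_nonneg
    (hχ : IsL1Certificate σ At Ec Cc Fc J Ed Cd Fd χ χ' χp ε γ) (k : ℕ) : 0 ≤ χp (k + 1) := by
  simpa using hχ.piecewiseC1.piecewiseContinuous.le_of_forall_le hχ.nonneg (k + 1)

theorem IsTrajectory.piecewiseContinuous_storage (hx : IsTrajectory σ At Ec J Ed wc wd x)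
    (hχ : PiecewiseC1 σ χ χ' χp) :
    σ.PiecewiseContinuous (fun s => χ s ⬝ᵥ |x s|) fun k => σ.rightLim χ χp k ⬝ᵥ
      |σ.rightLim x (fun k => J k *ᵥ x (σ.t k) + Ed k *ᵥ wd k) k| :=
  (hχ.piecewiseContinuous.prodMk hx.piecewiseContinuous).comp
    (by fun_prop : Continuous fun p : (Fin n → ℝ) × (Fin n → ℝ) => p.1 ⬝ᵥ |p.2|)

theorem IsTrajectory.exists_piecewiseContinuous_output (hx : IsTrajectory σ At Ec J Ed wc wd x)
    (hCc : ContinuousOn Cc (Ici 0)) (hFc : ContinuousOn Fc (Ici 0)) (hwc : Continuous wc)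
    {Φ : Matrix (Fin qc) (Fin n) ℝ × Matrix (Fin qc) (Fin pc) ℝ × (Fin n → ℝ) × (Fin pc → ℝ) → ℝ}
    (hΦ : Continuous Φ) : ∃ fp, σ.PiecewiseContinuous (fun s => Φ (Cc s, Fc s, x s, wc s)) fp :=
  ⟨_, ((ImpulseSeq.PiecewiseContinuous.of_continuousOn_Ici hCc).prodMk
    ((ImpulseSeq.PiecewiseContinuous.of_continuousOn_Ici hFc).prodMk (hx.piecewiseContinuous.prodMk
      (ImpulseSeq.PiecewiseContinuous.of_continuousOn_Ici hwc.continuousOn)))).comp hΦ⟩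

theorem IsTrajectory.exists_hasDerivWithinAt_storage_le (hx : IsTrajectory σ At Ec J Ed wc wd x)
    (hwc : ∀ s, 0 ≤ wc s) (hsys : IsPositiveSystem At Ec Cc Fc J Ed Cd Fd)
    (hχ : IsL1Certificate σ At Ec Cc Fc J Ed Cd Fd χ χ' χp ε γ) (hε : 0 ≤ ε)
    {k : ℕ} {s : ℝ} (hs : s ∈ Ioo (σ.t k) (σ.t (k + 1))) :
    ∃ d ≤ -ε * norm1 (x s) - ∑ i, (Cc s *ᵥ |x s| + Fc s *ᵥ wc s) i + γ * ∑ i, wc s i,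
      HasDerivWithinAt (fun u => χ u ⬝ᵥ |x u|) d (Ici s) s := by
  have hs0 : σ.t 0 ≤ s := (σ.t_zero_le k).trans hs.1.le
  exact ⟨_, flow_dissipation hε (hχ.nonneg s hs0) (hsys.metzler s (σ.t0_nonneg.trans hs0))
    (hsys.Ec_nonneg s (σ.t0_nonneg.trans hs0)) (hwc s) (hχ.flow k s hs) (hχ.perf_c s hs0),
    hasDerivWithinAt_dotProduct_abs (hχ.piecewiseC1.2.1 k s hs) (hx.2.1 k s hs)⟩

theorem IsTrajectory.storage_le_pow_kappa_mul_exp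
    (hx : IsTrajectory σ At Ec J Ed (fun _ => 0) (fun _ => 0) x)
    (hsys : IsPositiveSystem At Ec Cc Fc J Ed Cd Fd)
    (hχ : IsL1Certificate σ At Ec Cc Fc J Ed Cd Fd χ χ' χp ε γ) {c : ℝ}
    (hχc : ∀ s, σ.t 0 ≤ s → ∀ i, χ s i ≤ c) (hε : 0 < ε) (hεc : ε ≤ c) {s : ℝ} (hs : σ.t 0 ≤ s) :
    χ s ⬝ᵥ |x s| ≤ (1 - ε / c) ^ σ.kappa (σ.t 0) s
      * (exp (-(ε / c * (s - σ.t 0))) * (χ (σ.t 0) ⬝ᵥ |x (σ.t 0)|)) := by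
  have hc : 0 < c := hε.trans_le hεc
  have hrate : ∀ u, σ.t 0 ≤ u → ε / c * (χ u ⬝ᵥ |x u|) ≤ ε * norm1 (x u) := fun u hu => by
    calc ε / c * (χ u ⬝ᵥ |x u|) ≤ ε / c * (c * norm1 (x u)) :=
          mul_le_mul_of_nonneg_left (dotProduct_abs_le_mul_norm1 (hχc u hu) _) (by positivity)
      _ = ε * norm1 (x u) := by field_simp
  have hderiv : ∀ k, ∀ y ∈ Ioo (σ.t k) (σ.t (k + 1)),
      ∃ d ≤ -(ε / c) * (χ y ⬝ᵥ |x y|), HasDerivWithinAt (fun u => χ u ⬝ᵥ |x u|) d (Ici y) y := by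
    intro k y hy
    have hy0 : σ.t 0 ≤ y := (σ.t_zero_le k).trans hy.1.le
    obtain ⟨d, hd, hderiv⟩ :=
      hx.exists_hasDerivWithinAt_storage_le (fun _ => le_rfl) hsys hχ hε.le hy
    have hG : 0 ≤ ∑ i, (Cc y *ᵥ |x y|) i := Finset.sum_nonneg fun i _ =>
      mulVec_nonneg_of_nonneg (hsys.Cc_nonneg y (σ.t0_nonneg.trans hy0)) (abs_nonneg _) i
    simp only [mulVec_zero, add_zero, Pi.zero_apply, Finset.sum_const_zero, mul_zero] at hd
    exact ⟨d, by linarith [hrate y hy0], hderiv⟩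
  have hcontract : ∀ k, χp (k + 1) ⬝ᵥ |J (k + 1) *ᵥ x (σ.t (k + 1))|
      ≤ (1 - ε / c) * (χ (σ.t (k + 1)) ⬝ᵥ |x (σ.t (k + 1))|) := by
    intro k
    have hjd := jump_dissipation (x := x (σ.t (k + 1))) (w := 0) hε.le (hχ.jump_weight_nonneg k)
      (hsys.J_nonneg _ k.succ_pos) (hsys.Ed_nonneg _ k.succ_pos) le_rfl (hχ.jump _ k.succ_pos)
      (hχ.perf_d _ k.succ_pos)
    have hD : 0 ≤ ∑ i, (Cd (k + 1) *ᵥ |x (σ.t (k + 1))|) i := Finset.sum_nonneg fun i _ =>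
      mulVec_nonneg_of_nonneg (hsys.Cd_nonneg _ k.succ_pos) (abs_nonneg _) i
    simp only [mulVec_zero, add_zero, Pi.zero_apply, Finset.sum_const_zero, mul_zero] at hjd
    linarith [hrate _ (σ.t_zero_le (k + 1))]
  have hV := hx.piecewiseContinuous_storage hχ.piecewiseC1
  refine σ.le_pow_kappa_mul_exp_of_flow_of_jump (sub_nonneg.2 ((div_le_one hc).2 hεc)) (by simp)
    (fun k b hb => le_mul_exp_of_hasDerivWithinAt_Ici_le hb.1
      ((hV k).1.mono (Ioc_subset_Ioc_right hb.2)) (hV k).2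
      fun y hy => hderiv k y ⟨hy.1, hy.2.trans_le hb.2⟩)
    (fun k => by simpa using hcontract k) hs

theorem exists_norm1_le_pow_kappa_mul_exp (hsys : IsPositiveSystem At Ec Cc Fc J Ed Cd Fd)
    (hχ : IsL1Certificate σ At Ec Cc Fc J Ed Cd Fd χ χ' χp ε γ) {χ1 χ2 : Fin n → ℝ}
    (hχ1 : ∀ i, 0 < χ1 i) (hbound : ∀ s : ℝ, σ.t 0 ≤ s → ∀ i, χ1 i ≤ χ s i ∧ χ s i ≤ χ2 i)
    (hε : 0 < ε) :
    ∃ (M α ρ : ℝ), 0 < M ∧ 0 < α ∧ ρ ∈ Ioo (0 : ℝ) 1 ∧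
      ∀ x : ℝ → Fin n → ℝ, IsTrajectory σ At Ec J Ed (fun _ => 0) (fun _ => 0) x →
        ∀ s : ℝ, σ.t 0 ≤ s → norm1 (x s) ≤
          M * (ρ ^ σ.kappa (σ.t 0) s * (exp (-(α * (s - σ.t 0))) * norm1 (x (σ.t 0)))) := by
  obtain ⟨c₁, hc₁, hc₁χ1⟩ := exists_pos_forall_le_of_forall_pos hχ1
  obtain ⟨B, hB⟩ := Finite.exists_le χ2
  -- `c₂ > ε` keeps the contraction factor `1 - ε / c₂` at the impulses positive.
  set c₂ := max B (2 * ε)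
  have hεc₂ : ε < c₂ := by linarith [le_max_right B (2 * ε)]
  have hc₂ : 0 < c₂ := hε.trans hεc₂
  have hχc₁ : ∀ s, σ.t 0 ≤ s → ∀ i, c₁ ≤ χ s i := fun s hs i => (hc₁χ1 i).trans (hbound s hs i).1
  have hχc₂ : ∀ s, σ.t 0 ≤ s → ∀ i, χ s i ≤ c₂ := fun s hs i =>
    ((hbound s hs i).2.trans (hB i)).trans (le_max_left _ _)
  refine ⟨c₂ / c₁, ε / c₂, 1 - ε / c₂, by positivity, by positivity,
    ⟨sub_pos.2 ((div_lt_one hc₂).2 hεc₂), by linarith [div_pos hε hc₂]⟩, fun x hx s hs => ?_⟩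
  have hρ : 0 ≤ (1 - ε / c₂) ^ σ.kappa (σ.t 0) s * exp (-(ε / c₂ * (s - σ.t 0))) :=
    mul_nonneg (pow_nonneg (sub_nonneg.2 ((div_le_one hc₂).2 hεc₂.le)) _) (exp_pos _).le
  rw [div_mul_eq_mul_div, le_div_iff₀ hc₁]
  calc norm1 (x s) * c₁ ≤ χ s ⬝ᵥ |x s| := by
        rw [mul_comm]; exact mul_norm1_le_dotProduct_abs (hχc₁ s hs) _
    _ ≤ (1 - ε / c₂) ^ σ.kappa (σ.t 0) s * exp (-(ε / c₂ * (s - σ.t 0)))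
          * (χ (σ.t 0) ⬝ᵥ |x (σ.t 0)|) := by
        rw [mul_assoc]; exact hx.storage_le_pow_kappa_mul_exp hsys hχ hχc₂ hε hεc₂.le hs
    _ ≤ (1 - ε / c₂) ^ σ.kappa (σ.t 0) s * exp (-(ε / c₂ * (s - σ.t 0)))
          * (c₂ * norm1 (x (σ.t 0))) :=
        mul_le_mul_of_nonneg_left (dotProduct_abs_le_mul_norm1 (hχc₂ _ le_rfl) _) hρ
    _ = _ := by ring

theorem IsTrajectory.storage_le_add_integral_add_sum (hx : IsTrajectory σ At Ec J Ed wc wd x)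
    (hwc : Continuous wc) (hwc0 : ∀ s, 0 ≤ wc s) (hwd0 : ∀ k, 0 ≤ wd k)
    (hCc : ContinuousOn Cc (Ici 0)) (hFc : ContinuousOn Fc (Ici 0))
    (hsys : IsPositiveSystem At Ec Cc Fc J Ed Cd Fd)
    (hχ : IsL1Certificate σ At Ec Cc Fc J Ed Cd Fd χ χ' χp ε γ) (hε : 0 ≤ ε) (k : ℕ) :
    χ (σ.t (k + 1)) ⬝ᵥ |x (σ.t (k + 1))| ≤ χ (σ.t 0) ⬝ᵥ |x (σ.t 0)|
      + (∫ s in σ.t 0..σ.t (k + 1), γ * ∑ i, wc s i - ∑ i, (Cc s *ᵥ |x s| + Fc s *ᵥ wc s) i)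
      + ∑ j ∈ Finset.range k, (γ * ∑ i, wd (j + 1) i
        - ∑ i, (Cd (j + 1) *ᵥ |x (σ.t (j + 1))| + Fd (j + 1) *ᵥ wd (j + 1)) i) := by
  obtain ⟨_, hψ⟩ := hx.exists_piecewiseContinuous_output hCc hFc hwc
    (Φ := fun p => γ * ∑ i, p.2.2.2 i - ∑ i, (p.1 *ᵥ |p.2.2.1| + p.2.1 *ᵥ p.2.2.2) i) (by fun_prop)
  have hderiv : ∀ k, ∀ y ∈ Ioo (σ.t k) (σ.t (k + 1)),
      ∃ d ≤ γ * ∑ i, wc y i - ∑ i, (Cc y *ᵥ |x y| + Fc y *ᵥ wc y) i,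
        HasDerivWithinAt (fun u => χ u ⬝ᵥ |x u|) d (Ici y) y := by
    intro k y hy
    obtain ⟨d, hd, hderiv⟩ := hx.exists_hasDerivWithinAt_storage_le hwc0 hsys hχ hε hy
    have : 0 ≤ ε * norm1 (x y) := mul_nonneg hε (Finset.sum_nonneg fun i _ => abs_nonneg _)
    exact ⟨d, by linarith, hderiv⟩
  have hstep : ∀ k, χp (k + 1) ⬝ᵥ |J (k + 1) *ᵥ x (σ.t (k + 1)) + Ed (k + 1) *ᵥ wd (k + 1)|
      ≤ χ (σ.t (k + 1)) ⬝ᵥ |x (σ.t (k + 1))| + (γ * ∑ i, wd (k + 1) i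
        - ∑ i, (Cd (k + 1) *ᵥ |x (σ.t (k + 1))| + Fd (k + 1) *ᵥ wd (k + 1)) i) := by
    intro k
    have := jump_dissipation (x := x (σ.t (k + 1))) hε (hχ.jump_weight_nonneg k)
      (hsys.J_nonneg _ k.succ_pos) (hsys.Ed_nonneg _ k.succ_pos) (hwd0 (k + 1))
      (hχ.jump _ k.succ_pos) (hχ.perf_d _ k.succ_pos)
    have : 0 ≤ ε * norm1 (x (σ.t (k + 1))) :=
      mul_nonneg hε (Finset.sum_nonneg fun i _ => abs_nonneg _)
    linarith
  have hV := hx.piecewiseContinuous_storage hχ.piecewiseC1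
  exact σ.le_add_integral_add_sum_of_flow_of_jump
    (δ := fun k => γ * ∑ i, wd k i - ∑ i, (Cd k *ᵥ |x (σ.t k)| + Fd k *ᵥ wd k) i) (by simp)
    hψ.integrableOn_Ioc
    (fun k b hb => le_add_integral_of_hasDerivWithinAt_Ici_le hb.1
      ((hV k).1.mono (Ioc_subset_Ioc_right hb.2)) (hV k).2
      ((hψ.integrableOn_Ioc k).mono_set (Ioc_subset_Ioc_right hb.2))
      ((hψ k).1.mono fun y hy => ⟨hy.1, hy.2.le.trans hb.2⟩)
      fun y hy => hderiv k y ⟨hy.1, hy.2.trans_le hb.2⟩)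
    (fun k => by simpa only [ImpulseSeq.rightLim_succ] using hstep k)
    k (σ.t (k + 1)) ⟨σ.t_lt_succ k, le_rfl⟩

theorem IsTrajectory.integral_add_sum_le_of_eq_zero (hx : IsTrajectory σ At Ec J Ed wc wd x)
    (hx0 : x (σ.t 0) = 0) (hwc : Continuous wc) (hwc0 : ∀ s, 0 ≤ wc s) (hwd0 : ∀ k, 0 ≤ wd k)
    (hW : IntegrableOn (fun s => ∑ i, wc s i) (Ici (σ.t 0)))
    (hWd : Summable fun k : ℕ => ∑ i, wd (k + 1) i)
    (hCc : ContinuousOn Cc (Ici 0)) (hFc : ContinuousOn Fc (Ici 0))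
    (hsys : IsPositiveSystem At Ec Cc Fc J Ed Cd Fd)
    (hχ : IsL1Certificate σ At Ec Cc Fc J Ed Cd Fd χ χ' χp ε γ) (hε : 0 ≤ ε) (hγ : 0 ≤ γ)
    (k : ℕ) :
    (∫ s in σ.t 0..σ.t (k + 1), ∑ i, (Cc s *ᵥ |x s| + Fc s *ᵥ wc s) i)
        + ∑ j ∈ Finset.range k, ∑ i, (Cd (j + 1) *ᵥ |x (σ.t (j + 1))| + Fd (j + 1) *ᵥ wd (j + 1)) i
      ≤ γ * ((∫ s in Ici (σ.t 0), ∑ i, wc s i) + ∑' k : ℕ, ∑ i, wd (k + 1) i) := by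
  obtain ⟨_, hG⟩ := hx.exists_piecewiseContinuous_output hCc hFc hwc
    (Φ := fun p => ∑ i, (p.1 *ᵥ |p.2.2.1| + p.2.1 *ᵥ p.2.2.2) i) (by fun_prop)
  have hstore := hx.storage_le_add_integral_add_sum hwc hwc0 hwd0 hCc hFc hsys hχ hε k
  have hVnonneg : 0 ≤ χ (σ.t (k + 1)) ⬝ᵥ |x (σ.t (k + 1))| :=
    dotProduct_nonneg_of_nonneg (hχ.nonneg _ (σ.t_zero_le _)) (abs_nonneg _)
  have hWc : Continuous fun s => ∑ i, wc s i := by fun_prop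
  rw [intervalIntegral.integral_sub ((hWc.intervalIntegrable _ _).const_mul γ)
    (σ.intervalIntegrable_t_zero hG.integrableOn_Ioc _), intervalIntegral.integral_const_mul,
    Finset.sum_sub_distrib, ← Finset.mul_sum] at hstore
  simp only [hx0, abs_zero, dotProduct_zero, zero_add] at hstore
  have hWle : (∫ s in σ.t 0..σ.t (k + 1), ∑ i, wc s i) ≤ ∫ s in Ici (σ.t 0), ∑ i, wc s i := by
    rw [intervalIntegral.integral_of_le (σ.t_zero_le _)]
    exact setIntegral_mono_set hW (Eventually.of_forall fun s => Finset.sum_nonneg fun i _ =>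
      hwc0 s i) (Ioc_subset_Ioi_self.trans Ioi_subset_Ici_self).eventuallyLE
  have hWdle := hWd.sum_le_tsum (Finset.range k) fun j _ => Finset.sum_nonneg fun i _ => hwd0 _ i
  linarith [mul_le_mul_of_nonneg_left (add_le_add hWle hWdle) hγ]

theorem IsTrajectory.integral_output_add_tsum_output_le (hx : IsTrajectory σ At Ec J Ed wc wd x)
    (hx0 : x (σ.t 0) = 0) (hwc : Continuous wc) (hwc0 : ∀ s, 0 ≤ wc s) (hwd0 : ∀ k, 0 ≤ wd k)
    (hW : IntegrableOn (fun s => ∑ i, wc s i) (Ici (σ.t 0)))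
    (hWd : Summable fun k : ℕ => ∑ i, wd (k + 1) i)
    (hCc : ContinuousOn Cc (Ici 0)) (hFc : ContinuousOn Fc (Ici 0))
    (hsys : IsPositiveSystem At Ec Cc Fc J Ed Cd Fd)
    (hχ : IsL1Certificate σ At Ec Cc Fc J Ed Cd Fd χ χ' χp ε γ) (hε : 0 ≤ ε) (hγ : 0 ≤ γ) :
    IntegrableOn (fun s => ∑ i, (Cc s *ᵥ x s + Fc s *ᵥ wc s) i) (Ici (σ.t 0)) ∧
      Summable (fun k : ℕ => ∑ i, (Cd (k + 1) *ᵥ x (σ.t (k + 1)) + Fd (k + 1) *ᵥ wd (k + 1)) i) ∧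
      (∫ s in Ici (σ.t 0), ∑ i, (Cc s *ᵥ x s + Fc s *ᵥ wc s) i) +
          ∑' k : ℕ, ∑ i, (Cd (k + 1) *ᵥ x (σ.t (k + 1)) + Fd (k + 1) *ᵥ wd (k + 1)) i ≤
        γ * ((∫ s in Ici (σ.t 0), ∑ i, wc s i) + ∑' k : ℕ, ∑ i, wd (k + 1) i) := by
  obtain ⟨_, hG⟩ := hx.exists_piecewiseContinuous_output hCc hFc hwc
    (Φ := fun p => ∑ i, (p.1 *ᵥ |p.2.2.1| + p.2.1 *ᵥ p.2.2.2) i) (by fun_prop)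
  obtain ⟨_, hz⟩ := hx.exists_piecewiseContinuous_output hCc hFc hwc
    (Φ := fun p => ∑ i, (p.1 *ᵥ p.2.2.1 + p.2.1 *ᵥ p.2.2.2) i) (by fun_prop)
  have hzc : ∀ s ∈ Ioi (σ.t 0), |∑ i, (Cc s *ᵥ x s + Fc s *ᵥ wc s) i|
      ≤ ∑ i, (Cc s *ᵥ |x s| + Fc s *ᵥ wc s) i := fun s hs =>
    have hs0 : 0 ≤ s := σ.t0_nonneg.trans (le_of_lt hs)
    abs_sum_mulVec_add_mulVec_le (hsys.Cc_nonneg s hs0) (hsys.Fc_nonneg s hs0) _ (hwc0 s)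
  have hzd : ∀ k : ℕ, |∑ i, (Cd (k + 1) *ᵥ x (σ.t (k + 1)) + Fd (k + 1) *ᵥ wd (k + 1)) i|
      ≤ ∑ i, (Cd (k + 1) *ᵥ |x (σ.t (k + 1))| + Fd (k + 1) *ᵥ wd (k + 1)) i := fun k =>
    abs_sum_mulVec_add_mulVec_le (hsys.Cd_nonneg _ k.succ_pos) (hsys.Fd_nonneg _ k.succ_pos) _
      (hwd0 _)
  obtain ⟨hGi, hDs, hle⟩ := integral_add_tsum_le_of_forall_partial_le
    (σ.tendsto_atTop.comp (tendsto_add_atTop_nat 1)) (fun k => σ.t_zero_le _)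
    (fun k => (σ.intervalIntegrable_t_zero hG.integrableOn_Ioc (k + 1)).1)
    (fun s hs => (abs_nonneg _).trans (hzc s hs)) (fun k => (abs_nonneg _).trans (hzd k))
    (hx.integral_add_sum_le_of_eq_zero hx0 hwc hwc0 hwd0 hW hWd hCc hFc hsys hχ hε hγ)
  have hzi : IntegrableOn (fun s => ∑ i, (Cc s *ᵥ x s + Fc s *ᵥ wc s) i) (Ioi (σ.t 0)) :=
    hGi.mono' hz.aestronglyMeasurable ((ae_restrict_iff' measurableSet_Ioi).2
      (Eventually.of_forall fun s hs => (Real.norm_eq_abs _).trans_le (hzc s hs)))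
  have hzs := Summable.of_norm_bounded hDs fun k => (Real.norm_eq_abs _).trans_le (hzd k)
  refine ⟨(integrableOn_Ici_iff_integrableOn_Ioi).2 hzi, hzs, ?_⟩
  rw [integral_Ici_eq_integral_Ioi]
  exact (add_le_add (setIntegral_mono_on hzi hGi measurableSet_Ioi fun s hs =>
    (le_abs_self _).trans (hzc s hs))
    (hzs.tsum_le_tsum (fun k => (le_abs_self _).trans (hzd k)) hDs)).trans hle

end Trajectory

theorem hybrid_L1_performance_suff_general {n pc pd qc qd : ℕ} (σ : ImpulseSeq)
    (At : ℝ → Matrix (Fin n) (Fin n) ℝ) (Ec : ℝ → Matrix (Fin n) (Fin pc) ℝ)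
    (Cc : ℝ → Matrix (Fin qc) (Fin n) ℝ) (Fc : ℝ → Matrix (Fin qc) (Fin pc) ℝ)
    (J : ℕ → Matrix (Fin n) (Fin n) ℝ) (Ed : ℕ → Matrix (Fin n) (Fin pd) ℝ)
    (Cd : ℕ → Matrix (Fin qd) (Fin n) ℝ) (Fd : ℕ → Matrix (Fin qd) (Fin pd) ℝ)
    (hCc : ContinuousOn Cc (Set.Ici 0)) (hFc : ContinuousOn Fc (Set.Ici 0))
    (hAM : ∀ t : ℝ, 0 ≤ t → Metzler (At t))
    (hEcp : ∀ t : ℝ, 0 ≤ t → ∀ i j, 0 ≤ Ec t i j)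
    (hCcp : ∀ t : ℝ, 0 ≤ t → ∀ i j, 0 ≤ Cc t i j)
    (hFcp : ∀ t : ℝ, 0 ≤ t → ∀ i j, 0 ≤ Fc t i j)
    (hJp : ∀ k : ℕ, 1 ≤ k → ∀ i j, 0 ≤ J k i j)
    (hEdp : ∀ k : ℕ, 1 ≤ k → ∀ i j, 0 ≤ Ed k i j)
    (hCdp : ∀ k : ℕ, 1 ≤ k → ∀ i j, 0 ≤ Cd k i j)
    (hFdp : ∀ k : ℕ, 1 ≤ k → ∀ i j, 0 ≤ Fd k i j)
    (χ1 χ2 : Fin n → ℝ) (hχ1 : ∀ i, 0 < χ1 i)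
    (ε γ : ℝ) (hε : 0 < ε) (hγ : 0 < γ)
    (χ χ' : ℝ → Fin n → ℝ) (χp : ℕ → Fin n → ℝ)
    (hpc : PiecewiseC1 σ χ χ' χp)
    (hbound : ∀ s : ℝ, σ.t 0 ≤ s → ∀ i, χ1 i ≤ χ s i ∧ χ s i ≤ χ2 i)
    (hflow : ∀ k, ∀ s ∈ Set.Ioo (σ.t k) (σ.t (k + 1)),
      ∀ j, (χ' s + χ s ᵥ* At s + (fun _ => (1 : ℝ)) ᵥ* Cc s) j ≤ -ε)
    (hjump : ∀ k : ℕ, 1 ≤ k →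
      ∀ j, (χp k ᵥ* J k - χ (σ.t k) + (fun _ => (1 : ℝ)) ᵥ* Cd k) j ≤ -ε)
    (hperfc : ∀ s : ℝ, σ.t 0 ≤ s →
      ∀ j, (χ s ᵥ* Ec s + (fun _ => (1 : ℝ)) ᵥ* Fc s) j - γ ≤ -ε)
    (hperfd : ∀ k : ℕ, 1 ≤ k →
      ∀ j, (χp k ᵥ* Ed k + (fun _ => (1 : ℝ)) ᵥ* Fd k) j - γ ≤ -ε) :
    (∃ (M α ρ : ℝ), 0 < M ∧ 0 < α ∧ ρ ∈ Set.Ioo (0 : ℝ) 1 ∧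
      ∀ x : ℝ → Fin n → ℝ,
        IsTrajectory σ At Ec J Ed (fun _ => 0) (fun _ => 0) x →
        ∀ s : ℝ, σ.t 0 ≤ s →
          norm1 (x s) ≤ M * (ρ ^ (σ.kappa (σ.t 0) s) *
            (Real.exp (-(α * (s - σ.t 0))) * norm1 (x (σ.t 0))))) ∧
    (∀ (wc : ℝ → Fin pc → ℝ) (wd : ℕ → Fin pd → ℝ) (x : ℝ → Fin n → ℝ),
      Continuous wc →
      (∀ s i, 0 ≤ wc s i) → (∀ k i, 0 ≤ wd k i) →
      IntegrableOn (fun s => ∑ i, wc s i) (Set.Ici (σ.t 0)) →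
      Summable (fun k : ℕ => ∑ i, wd (k + 1) i) →
      IsTrajectory σ At Ec J Ed wc wd x →
      x (σ.t 0) = 0 →
      IntegrableOn (fun s => ∑ i, (Cc s *ᵥ x s + Fc s *ᵥ wc s) i) (Set.Ici (σ.t 0)) ∧
      Summable (fun k : ℕ => ∑ i, (Cd (k + 1) *ᵥ x (σ.t (k + 1)) + Fd (k + 1) *ᵥ wd (k + 1)) i) ∧
      (∫ s in Set.Ici (σ.t 0), ∑ i, (Cc s *ᵥ x s + Fc s *ᵥ wc s) i) +
          ∑' k : ℕ, ∑ i, (Cd (k + 1) *ᵥ x (σ.t (k + 1)) + Fd (k + 1) *ᵥ wd (k + 1)) i ≤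
        γ * ((∫ s in Set.Ici (σ.t 0), ∑ i, wc s i) + ∑' k : ℕ, ∑ i, wd (k + 1) i)) := by
  have hsys : IsPositiveSystem At Ec Cc Fc J Ed Cd Fd :=
    ⟨hAM, hEcp, hCcp, hFcp, hJp, hEdp, hCdp, hFdp⟩
  have hχ : IsL1Certificate σ At Ec Cc Fc J Ed Cd Fd χ χ' χp ε γ :=
    ⟨hpc, fun s hs i => (hχ1 i).le.trans (hbound s hs i).1, hflow, hjump, hperfc, hperfd⟩
  exact ⟨exists_norm1_le_pow_kappa_mul_exp hsys hχ hχ1 hbound hε,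
    fun wc wd x hwc hwc0 hwd0 hW hWd hx hx0 => hx.integral_output_add_tsum_output_le hx0 hwc hwc0
      hwd0 hW hWd hCc hFc hsys hχ hε.le hγ.le⟩

/-- The linear sum-separable copositive Lyapunov conditions with slack `ε` guarantee uniform
exponential stability and the hybrid `L₁×ℓ₁` performance level `γ`. -/
theorem hybrid_L1_performance_suff {n pc pd qc qd : ℕ} (hn : 0 < n) (σ : ImpulseSeq)
    (At : ℝ → Matrix (Fin n) (Fin n) ℝ) (Ec : ℝ → Matrix (Fin n) (Fin pc) ℝ)
    (Cc : ℝ → Matrix (Fin qc) (Fin n) ℝ) (Fc : ℝ → Matrix (Fin qc) (Fin pc) ℝ)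
    (J : ℕ → Matrix (Fin n) (Fin n) ℝ) (Ed : ℕ → Matrix (Fin n) (Fin pd) ℝ)
    (Cd : ℕ → Matrix (Fin qd) (Fin n) ℝ) (Fd : ℕ → Matrix (Fin qd) (Fin pd) ℝ)
    (hA : ContinuousOn At (Set.Ici 0)) (hEc : ContinuousOn Ec (Set.Ici 0))
    (hCc : ContinuousOn Cc (Set.Ici 0)) (hFc : ContinuousOn Fc (Set.Ici 0))
    (hAb : ∃ M, ∀ t ∈ Set.Ici (0 : ℝ), ∀ i j, |At t i j| ≤ M)
    (hEcb : ∃ M, ∀ t ∈ Set.Ici (0 : ℝ), ∀ i j, |Ec t i j| ≤ M)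
    (hCcb : ∃ M, ∀ t ∈ Set.Ici (0 : ℝ), ∀ i j, |Cc t i j| ≤ M)
    (hFcb : ∃ M, ∀ t ∈ Set.Ici (0 : ℝ), ∀ i j, |Fc t i j| ≤ M)
    (hJb : ∃ M, ∀ k, ∀ i j, |J k i j| ≤ M)
    (hEdb : ∃ M, ∀ k, ∀ i j, |Ed k i j| ≤ M)
    (hCdb : ∃ M, ∀ k, ∀ i j, |Cd k i j| ≤ M)
    (hFdb : ∃ M, ∀ k, ∀ i j, |Fd k i j| ≤ M)
    (hAM : ∀ t : ℝ, 0 ≤ t → Metzler (At t))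
    (hEcp : ∀ t : ℝ, 0 ≤ t → ∀ i j, 0 ≤ Ec t i j)
    (hCcp : ∀ t : ℝ, 0 ≤ t → ∀ i j, 0 ≤ Cc t i j)
    (hFcp : ∀ t : ℝ, 0 ≤ t → ∀ i j, 0 ≤ Fc t i j)
    (hJp : ∀ k : ℕ, 1 ≤ k → ∀ i j, 0 ≤ J k i j)
    (hEdp : ∀ k : ℕ, 1 ≤ k → ∀ i j, 0 ≤ Ed k i j)
    (hCdp : ∀ k : ℕ, 1 ≤ k → ∀ i j, 0 ≤ Cd k i j)
    (hFdp : ∀ k : ℕ, 1 ≤ k → ∀ i j, 0 ≤ Fd k i j)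
    (χ1 χ2 : Fin n → ℝ) (hχ1 : ∀ i, 0 < χ1 i) (hχ12 : ∀ i, χ1 i ≤ χ2 i)
    (ε γ : ℝ) (hε : 0 < ε) (hγ : 0 < γ)
    (χ χ' : ℝ → Fin n → ℝ) (χp : ℕ → Fin n → ℝ)
    (hpc : PiecewiseC1 σ χ χ' χp)
    (hbound : ∀ s : ℝ, σ.t 0 ≤ s → ∀ i, χ1 i ≤ χ s i ∧ χ s i ≤ χ2 i)
    (hflow : ∀ k, ∀ s ∈ Set.Ioo (σ.t k) (σ.t (k + 1)),
      ∀ j, (χ' s + χ s ᵥ* At s + (fun _ => (1 : ℝ)) ᵥ* Cc s) j ≤ -ε)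
    (hjump : ∀ k : ℕ, 1 ≤ k →
      ∀ j, (χp k ᵥ* J k - χ (σ.t k) + (fun _ => (1 : ℝ)) ᵥ* Cd k) j ≤ -ε)
    (hperfc : ∀ s : ℝ, σ.t 0 ≤ s →
      ∀ j, (χ s ᵥ* Ec s + (fun _ => (1 : ℝ)) ᵥ* Fc s) j - γ ≤ -ε)
    (hperfd : ∀ k : ℕ, 1 ≤ k →
      ∀ j, (χp k ᵥ* Ed k + (fun _ => (1 : ℝ)) ᵥ* Fd k) j - γ ≤ -ε) :
    (∃ (M α ρ : ℝ), 0 < M ∧ 0 < α ∧ ρ ∈ Set.Ioo (0 : ℝ) 1 ∧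
      ∀ x : ℝ → Fin n → ℝ,
        IsTrajectory σ At Ec J Ed (fun _ => 0) (fun _ => 0) x →
        ∀ s : ℝ, σ.t 0 ≤ s →
          norm1 (x s) ≤ M * (ρ ^ (σ.kappa (σ.t 0) s) *
            (Real.exp (-(α * (s - σ.t 0))) * norm1 (x (σ.t 0))))) ∧
    (∀ (wc : ℝ → Fin pc → ℝ) (wd : ℕ → Fin pd → ℝ) (x : ℝ → Fin n → ℝ),
      Continuous wc →
      (∀ s i, 0 ≤ wc s i) → (∀ k i, 0 ≤ wd k i) →
      IntegrableOn (fun s => ∑ i, wc s i) (Set.Ici (σ.t 0)) →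
      Summable (fun k : ℕ => ∑ i, wd (k + 1) i) →
      IsTrajectory σ At Ec J Ed wc wd x →
      x (σ.t 0) = 0 →
      IntegrableOn (fun s => ∑ i, (Cc s *ᵥ x s + Fc s *ᵥ wc s) i) (Set.Ici (σ.t 0)) ∧
      Summable (fun k : ℕ => ∑ i, (Cd (k + 1) *ᵥ x (σ.t (k + 1)) + Fd (k + 1) *ᵥ wd (k + 1)) i) ∧
      (∫ s in Set.Ici (σ.t 0), ∑ i, (Cc s *ᵥ x s + Fc s *ᵥ wc s) i) +
          ∑' k : ℕ, ∑ i, (Cd (k + 1) *ᵥ x (σ.t (k + 1)) + Fd (k + 1) *ᵥ wd (k + 1)) i ≤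
        γ * ((∫ s in Set.Ici (σ.t 0), ∑ i, wc s i) + ∑' k : ℕ, ∑ i, wd (k + 1) i)) :=
  hybrid_L1_performance_suff_general σ At Ec Cc Fc J Ed Cd Fd hCc hFc hAM hEcp hCcp hFcp hJp hEdp
    hCdp hFdp χ1 χ2 hχ1 ε γ hε hγ χ χ' χp hpc hbound hflow hjump hperfc hperfd
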